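/- arXiv:2507.00563 — 2 statements merged into one kernel-verified Lean document; each statement's English description precedes it below -/
import Mathlib

section
/- Knot insertion preserves the curve: inserting a knot ū ∈ [u_k, u_{k+1}) into the knot vector of a degree-p B-spline curve, with new control points Q_i = α_i P_i + (1 − α_i) P_{i−1} where α_i = 1 for i ≤ k−p, α_i = 0 for i ≥ k+1, and α_i = (ū − u_i)/(u_{i+p} − u_i) otherwise, yields a curve identical to the original as a map. -/
/-- B-spline basis functions `N i p u` defined by the Cox–de Boor recursion on a
knot vector `U` (indexed by `ℕ`). Division by zero in Lean yields `0`, which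
implements the convention `0/0 = 0`. -/
noncomputable def bspline (U : ℕ → ℝ) : ℕ → ℕ → ℝ → ℝ
  | i, 0, u => if U i ≤ u ∧ u < U (i + 1) then 1 else 0
  | i, p + 1, u =>
      (u - U i) / (U (i + p + 1) - U i) * bspline U i p u
      + (U (i + p + 2) - u) / (U (i + p + 2) - U (i + 1)) * bspline U (i + 1) p u


lemma bspline_zero (U : ℕ → ℝ) (i : ℕ) (u : ℝ) :
    bspline U i 0 u = if U i ≤ u ∧ u < U (i + 1) then 1 else 0 := rfl

lemma bspline_succ (U : ℕ → ℝ) (i p : ℕ) (u : ℝ) :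
    bspline U i (p + 1) u
      = (u - U i) / (U (i + p + 1) - U i) * bspline U i p u
        + (U (i + p + 2) - u) / (U (i + p + 2) - U (i + 1)) * bspline U (i + 1) p u := rfl

lemma bspline_vanish (U : ℕ → ℝ) (hU : Monotone U) :
    ∀ (p i : ℕ) (u : ℝ), U i = U (i + p + 1) → bspline U i p u = 0 := by
  intro p
  induction p with
  | zero =>
    intro i u h
    rw [bspline_zero, if_neg]
    rintro ⟨h1, h2⟩
    rw [show i + 0 + 1 = i + 1 from rfl] at h
    linarith [h.le]
  | succ p ih =>
    intro i u h
    have e1 : U i = U (i + p + 1) := le_antisymm (hU (by omega)) (by rw [h]; exact hU (by omega))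
    have e2 : U (i + 1) = U (i + 1 + p + 1) :=
      le_antisymm (hU (by omega)) (by rw [show i+1+p+1 = i + (p+1) + 1 by omega, ← h]; exact hU (by omega))
    rw [bspline_succ, ih i u e1, ih (i+1) u e2]
    ring

noncomputable def alph (U : ℕ → ℝ) (k : ℕ) (ubar : ℝ) (q i : ℕ) : ℝ :=
  if i + q ≤ k then 1 else if k + 1 ≤ i then 0 else (ubar - U i) / (U (i + q) - U i)

lemma alph_left {U : ℕ → ℝ} {k : ℕ} {ubar : ℝ} {q i : ℕ} (h : i + q ≤ k) :
    alph U k ubar q i = 1 := if_pos h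

lemma alph_right {U : ℕ → ℝ} {k : ℕ} {ubar : ℝ} {q i : ℕ} (h : k + 1 ≤ i) :
    alph U k ubar q i = 0 := by
  unfold alph; rw [if_neg (by omega), if_pos h]

lemma alph_mid {U : ℕ → ℝ} {k : ℕ} {ubar : ℝ} {q i : ℕ} (h : k + 1 ≤ i + q) (h' : i ≤ k) :
    alph U k ubar q i = (ubar - U i) / (U (i + q) - U i) := by
  unfold alph; rw [if_neg (by omega), if_neg (by omega)]

lemma key (U V : ℕ → ℝ) (hU : Monotone U) (hV : Monotone V) (k : ℕ) (ubar : ℝ)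
    (h1 : U k ≤ ubar) (h2 : ubar < U (k + 1))
    (hVle : ∀ j, j ≤ k → V j = U j) (hVk : V (k + 1) = ubar)
    (hVge : ∀ j, k + 2 ≤ j → V j = U (j - 1)) :
    ∀ (q i : ℕ) (u : ℝ),
      bspline U i q u
        = alph U k ubar q i * bspline V i q u
          + (1 - alph U k ubar q (i + 1)) * bspline V (i + 1) q u := by
  have hlt : ∀ a b : ℕ, a ≤ k → k + 1 ≤ b → U a < U b := fun a b ha hb =>
    lt_of_le_of_lt (le_trans (hU ha) h1) (lt_of_lt_of_le h2 (hU hb))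
  intro q
  induction q with
  | zero =>
    intro i u
    by_cases hik : i + 1 ≤ k
    · rw [alph_left (by omega : i + 0 ≤ k), alph_left (by omega : i + 1 + 0 ≤ k),
        bspline_zero, bspline_zero, hVle i (by omega), hVle (i+1) (by omega)]
      ring
    · by_cases hik2 : i ≤ k
      · -- i = k
        rw [show i = k from by omega] 
        rw [alph_left (by omega : k + 0 ≤ k), alph_right (by omega : k + 1 ≤ k + 1),
          bspline_zero, bspline_zero, bspline_zero, hVle k le_rfl, hVk]
        have e : V (k + 1 + 1) = U (k + 1) := by
          rw [hVge _ (by omega)]; congr 1 <;> omega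
        rw [e]
        by_cases h3 : U k ≤ u
        · by_cases h5 : u < ubar
          · rw [if_pos ⟨h3, h5.trans h2⟩, if_pos ⟨h3, h5⟩,
              if_neg (fun hh => absurd hh.1 (not_le.mpr h5))]
            ring
          · push_neg at h5
            by_cases h4 : u < U (k + 1)
            · rw [if_pos ⟨h3, h4⟩, if_neg (fun hh => absurd hh.2 (not_lt.mpr h5)),
                if_pos ⟨h5, h4⟩]
              ring
            · rw [if_neg (fun hh => h4 hh.2), if_neg (fun hh => absurd hh.2 (not_lt.mpr h5)),
                if_neg (fun hh => h4 hh.2)]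
              ring
        · rw [if_neg (fun hh => h3 hh.1), if_neg (fun hh => h3 hh.1),
            if_neg (fun hh => h3 (le_trans h1 hh.1))]
          ring
      · -- k + 1 ≤ i
        rw [alph_right (by omega : k + 1 ≤ i), alph_right (by omega : k + 1 ≤ i + 1),
          bspline_zero, bspline_zero, bspline_zero]
        have ea : V (i + 1) = U i := by rw [hVge _ (by omega)]; congr 1 <;> omega
        have eb : V (i + 1 + 1) = U (i + 1) := by rw [hVge _ (by omega)]; congr 1 <;> omega
        rw [ea, eb]
        ring
  | succ q ih =>
    intro i u
    have e2 : i + 1 + 1 = i + 2 := by omega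
    have e3 : i + 1 + q + 1 = i + q + 2 := by omega
    have e4 : i + 1 + q + 2 = i + q + 3 := by omega
    rw [bspline_succ U, bspline_succ V i, bspline_succ V (i+1), ih i u, ih (i+1) u, e2, e3, e4]
    have hG1 : (u - U i)/(U (i+q+1) - U i) * alph U k ubar q i * bspline V i q u
        = alph U k ubar (q+1) i * ((u - V i)/(V (i+q+1) - V i)) * bspline V i q u := by
      by_cases hA : i + q + 1 ≤ k
      · rw [alph_left (by omega : i + q ≤ k), alph_left (by omega : i + (q+1) ≤ k),
          hVle i (by omega), hVle (i+q+1) (by omega)]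
        ring
      · by_cases hB : k + 1 ≤ i
        · rw [alph_right hB, alph_right hB]; ring
        · by_cases hC : i + q ≤ k
          · have hk : i + q + 1 = k + 1 := by omega
            rw [alph_left hC, alph_mid (by omega : k + 1 ≤ i + (q+1)) (by omega : i ≤ k),
              hVle i (by omega), show i + (q + 1) = i + q + 1 from by omega, hk, hVk]
            by_cases hD : U i = ubar
            · have hz : bspline V i q u = 0 := by
                apply bspline_vanish V hV
                rw [show i + q + 1 = k + 1 from by omega, hVle i (by omega), hVk, hD]
              rw [hz]; ring
            · have hne1 : U (k+1) - U i ≠ 0 :=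
                sub_ne_zero.mpr (hlt i (k+1) (by omega) le_rfl).ne'
              have hne2 : ubar - U i ≠ 0 := sub_ne_zero.mpr (Ne.symm hD)
              field_simp
              try ring
              try exact Or.inl trivial
          · rw [alph_mid (by omega : k + 1 ≤ i + q) (by omega : i ≤ k),
              alph_mid (by omega : k + 1 ≤ i + (q+1)) (by omega : i ≤ k),
              hVle i (by omega), hVge (i+q+1) (by omega),
              show i + q + 1 - 1 = i + q from by omega,
              show i + (q + 1) = i + q + 1 from by omega]
            ring
    have hG3 : (U (i+q+2) - u)/(U (i+q+2) - U (i+1)) * (1 - alph U k ubar q (i+2)) * bspline V (i+2) q u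
        = (1 - alph U k ubar (q+1) (i+1)) * ((V (i+q+3) - u)/(V (i+q+3) - V (i+2))) * bspline V (i+2) q u := by
      by_cases hA : i + q + 2 ≤ k
      · rw [alph_left (by omega : i + 2 + q ≤ k), alph_left (by omega : i + 1 + (q+1) ≤ k)]
        ring
      · by_cases hB : k ≤ i
        · rw [alph_right (by omega : k + 1 ≤ i + 2), alph_right (by omega : k + 1 ≤ i + 1),
            hVge (i+q+3) (by omega), hVge (i+2) (by omega),
            show i + q + 3 - 1 = i + q + 2 from by omega,
            show i + 2 - 1 = i + 1 from by omega]
          ring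
        · by_cases hC : k + 1 ≤ i + 2
          · -- i + 1 = k
            rw [alph_right hC, alph_mid (by omega : k + 1 ≤ i + 1 + (q+1)) (by omega : i + 1 ≤ k),
              show i + 1 + (q + 1) = i + q + 2 from by omega,
              hVge (i+q+3) (by omega), show i + q + 3 - 1 = i + q + 2 from by omega,
              show i + 2 = k + 1 from by omega, hVk]
            have hne1 : U (i+q+2) - U (i+1) ≠ 0 :=
              sub_ne_zero.mpr (hlt (i+1) (i+q+2) (by omega) (by omega)).ne'
            have hne2 : U (i+q+2) - ubar ≠ 0 :=
              sub_ne_zero.mpr (lt_of_lt_of_le h2 (hU (by omega : k + 1 ≤ i + q + 2))).ne'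
            field_simp
            try ring
            try exact Or.inl trivial
          · rw [alph_mid (by omega : k + 1 ≤ i + 2 + q) (by omega : i + 2 ≤ k),
              alph_mid (by omega : k + 1 ≤ i + 1 + (q+1)) (by omega : i + 1 ≤ k),
              show i + 2 + q = i + q + 2 from by omega,
              show i + 1 + (q + 1) = i + q + 2 from by omega,
              hVge (i+q+3) (by omega), show i + q + 3 - 1 = i + q + 2 from by omega,
              hVle (i+2) (by omega)]
            have hne1 : U (i+q+2) - U (i+1) ≠ 0 :=
              sub_ne_zero.mpr (hlt (i+1) (i+q+2) (by omega) (by omega)).ne'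
            have hne2 : U (i+q+2) - U (i+2) ≠ 0 :=
              sub_ne_zero.mpr (hlt (i+2) (i+q+2) (by omega) (by omega)).ne'
            field_simp
            try ring
            try exact Or.inl trivial
    have hG2 : ((u - U i)/(U (i+q+1) - U i) * (1 - alph U k ubar q (i+1))
          + (U (i+q+2) - u)/(U (i+q+2) - U (i+1)) * alph U k ubar q (i+1)) * bspline V (i+1) q u
        = (alph U k ubar (q+1) i * ((V (i+q+2) - u)/(V (i+q+2) - V (i+1)))
           + (1 - alph U k ubar (q+1) (i+1)) * ((u - V (i+1))/(V (i+q+2) - V (i+1)))) * bspline V (i+1) q u := by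
      by_cases hA : i + q + 1 ≤ k
      · by_cases hA2 : i + q + 2 ≤ k
        · rw [alph_left (by omega : i + 1 + q ≤ k), alph_left (by omega : i + (q+1) ≤ k),
            alph_left (by omega : i + 1 + (q+1) ≤ k),
            hVle (i+1) (by omega), hVle (i+q+2) (by omega)]
          ring
        · -- i + q + 2 = k + 1
          rw [alph_left (by omega : i + 1 + q ≤ k), alph_left (by omega : i + (q+1) ≤ k),
            alph_mid (by omega : k + 1 ≤ i + 1 + (q+1)) (by omega : i + 1 ≤ k),
            show i + 1 + (q + 1) = i + q + 2 from by omega,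
            hVle (i+1) (by omega), show i + q + 2 = k + 1 from by omega, hVk]
          by_cases hD : U (i+1) = ubar
          · have hz : bspline V (i+1) q u = 0 := by
              apply bspline_vanish V hV
              rw [show i + 1 + q + 1 = k + 1 from by omega, hVle (i+1) (by omega), hVk, hD]
            rw [hz]; ring
          · have hne1 : U (k+1) - U (i+1) ≠ 0 :=
              sub_ne_zero.mpr (hlt (i+1) (k+1) (by omega) le_rfl).ne'
            have hne2 : ubar - U (i+1) ≠ 0 := sub_ne_zero.mpr (Ne.symm hD)
            field_simp
            try ring
            try exact Or.inl trivial
      · by_cases hB : k + 1 ≤ i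
        · rw [alph_right (by omega : k + 1 ≤ i + 1), alph_right hB,
            alph_right (by omega : k + 1 ≤ i + 1),
            hVge (i+1) (by omega), hVge (i+q+2) (by omega),
            show i + 1 - 1 = i from by omega,
            show i + q + 2 - 1 = i + q + 1 from by omega]
          ring
        · by_cases hC : k ≤ i
          · -- i = k
            rw [show i = k from by omega]
            rw [alph_right (by omega : k + 1 ≤ k + 1), alph_right (by omega : k + 1 ≤ k + 1),
              alph_mid (by omega : k + 1 ≤ k + (q+1)) (by omega : k ≤ k),
              show k + (q + 1) = k + q + 1 from by omega,
              hVk,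
              hVge (k+q+2) (by omega), show k + q + 2 - 1 = k + q + 1 from by omega]
            have hne1 : U (k+q+1) - U k ≠ 0 :=
              sub_ne_zero.mpr (hlt k (k+q+1) (by omega) (by omega)).ne'
            have hne2 : U (k+q+1) - ubar ≠ 0 :=
              sub_ne_zero.mpr (lt_of_lt_of_le h2 (hU (by omega : k + 1 ≤ k + q + 1))).ne'
            field_simp
            try ring
            try exact Or.inl trivial
          · -- i + 1 ≤ k ≤ i + q
            rw [alph_mid (by omega : k + 1 ≤ i + 1 + q) (by omega : i + 1 ≤ k),
              alph_mid (by omega : k + 1 ≤ i + (q+1)) (by omega : i ≤ k),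
              alph_mid (by omega : k + 1 ≤ i + 1 + (q+1)) (by omega : i + 1 ≤ k),
              show i + 1 + q = i + q + 1 from by omega,
              show i + (q + 1) = i + q + 1 from by omega,
              show i + 1 + (q + 1) = i + q + 2 from by omega,
              hVle (i+1) (by omega), hVge (i+q+2) (by omega),
              show i + q + 2 - 1 = i + q + 1 from by omega]
            have hne1 : U (i+q+1) - U (i+1) ≠ 0 :=
              sub_ne_zero.mpr (hlt (i+1) (i+q+1) (by omega) (by omega)).ne'
            have hne2 : U (i+q+1) - U i ≠ 0 :=
              sub_ne_zero.mpr (hlt i (i+q+1) (by omega) (by omega)).ne'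
            have hne3 : U (i+q+2) - U (i+1) ≠ 0 :=
              sub_ne_zero.mpr (hlt (i+1) (i+q+2) (by omega) (by omega)).ne'
            field_simp
            try ring
            try exact Or.inl trivial
    linear_combination hG1 + hG2 + hG3

/-- Boehm's knot insertion theorem: inserting a knot
`ū ∈ [U k, U (k+1))` into the knot vector of a degree-`p` B-spline curve with
control points `P 0, …, P n` (knot indices `0, …, n + p + 1`), with new control
points `Q i = α i • P i + (1 - α i) • P (i-1)` where `α i = 1` for `i ≤ k - p`,
`α i = 0` for `i ≥ k + 1`, and `α i = (ū - U i)/(U (i+p) - U i)` otherwise,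
yields a curve identical to the original as a map on the parametric domain
`[U p, U (n+1))`. -/
theorem boehm_knot_insertion (U : ℕ → ℝ) (hU : Monotone U) (p n k : ℕ)
    (hpk : p ≤ k) (hkn : k ≤ n) (ubar : ℝ)
    (hub : U k ≤ ubar ∧ ubar < U (k + 1)) (P : ℕ → ℝ × ℝ) :
    ∀ u ∈ Set.Ico (U p) (U (n + 1)),
      (∑ i ∈ Finset.range (n + 1), bspline U i p u • P i)
        = ∑ i ∈ Finset.range (n + 2),
            bspline (fun j => if j ≤ k then U j else if j = k + 1 then ubar else U (j - 1))
              i p u •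
            ((if i + p ≤ k then (1 : ℝ)
              else if k + 1 ≤ i then 0
              else (ubar - U i) / (U (i + p) - U i)) • P i
             + (1 - (if i + p ≤ k then (1 : ℝ)
                     else if k + 1 ≤ i then 0
                     else (ubar - U i) / (U (i + p) - U i))) • P (i - 1)) := by
  intro u _
  set V : ℕ → ℝ := fun j => if j ≤ k then U j else if j = k + 1 then ubar else U (j - 1)
    with hVdef
  have hVle : ∀ j, j ≤ k → V j = U j := fun j hj => by simp [hVdef, hj]
  have hVk : V (k + 1) = ubar := by simp [hVdef]
  have hVge : ∀ j, k + 2 ≤ j → V j = U (j - 1) := fun j hj => by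
    simp only [hVdef]
    rw [if_neg (by omega), if_neg (by omega)]
  have hVmono : Monotone V := by
    apply monotone_nat_of_le_succ
    intro j
    by_cases hj1 : j + 1 ≤ k
    · rw [hVle j (by omega), hVle (j+1) hj1]; exact hU (by omega)
    · by_cases hj2 : j ≤ k
      · rw [hVle j hj2, show j + 1 = k + 1 from by omega, hVk]
        exact le_trans (hU (by omega)) hub.1
      · by_cases hj3 : j = k + 1
        · rw [hj3, hVk, hVge (k+1+1) (by omega)]
          exact le_trans hub.2.le (hU (by norm_num))
        · rw [hVge j (by omega), hVge (j+1) (by omega)]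
          exact hU (by omega)
  have hkey := key U V hU hVmono k ubar hub.1 hub.2 hVle hVk hVge
  have halph : ∀ i, (if i + p ≤ k then (1 : ℝ)
      else if k + 1 ≤ i then 0
      else (ubar - U i) / (U (i + p) - U i)) = alph U k ubar p i := fun i => rfl
  simp only [halph]
  have hS1 : ∑ i ∈ Finset.range (n + 2), (alph U k ubar p i * bspline V i p u) • P i
      = ∑ i ∈ Finset.range (n + 1), (alph U k ubar p i * bspline V i p u) • P i := by
    rw [show n + 2 = n + 1 + 1 from rfl, Finset.sum_range_succ,
      alph_right (show k + 1 ≤ n + 1 by omega)]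
    simp
  have hS2 : ∑ i ∈ Finset.range (n + 2), ((1 - alph U k ubar p i) * bspline V i p u) • P (i - 1)
      = ∑ i ∈ Finset.range (n + 1), ((1 - alph U k ubar p (i + 1)) * bspline V (i + 1) p u) • P i := by
    rw [show n + 2 = n + 1 + 1 from rfl, Finset.sum_range_succ',
      alph_left (show 0 + p ≤ k by omega)]
    simp
  calc ∑ i ∈ Finset.range (n + 1), bspline U i p u • P i
      = ∑ i ∈ Finset.range (n + 1),
          ((alph U k ubar p i * bspline V i p u) • P i
           + ((1 - alph U k ubar p (i + 1)) * bspline V (i + 1) p u) • P i) := by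
        refine Finset.sum_congr rfl fun i _ => ?_
        rw [hkey p i u, add_smul]
    _ = (∑ i ∈ Finset.range (n + 1), (alph U k ubar p i * bspline V i p u) • P i)
        + ∑ i ∈ Finset.range (n + 1), ((1 - alph U k ubar p (i + 1)) * bspline V (i + 1) p u) • P i :=
        Finset.sum_add_distrib
    _ = (∑ i ∈ Finset.range (n + 2), (alph U k ubar p i * bspline V i p u) • P i)
        + ∑ i ∈ Finset.range (n + 2), ((1 - alph U k ubar p i) * bspline V i p u) • P (i - 1) := by
        rw [hS1, hS2]
    _ = ∑ i ∈ Finset.range (n + 2),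
          bspline V i p u • (alph U k ubar p i • P i + (1 - alph U k ubar p i) • P (i - 1)) := by
        rw [← Finset.sum_add_distrib]
        refine Finset.sum_congr rfl fun i _ => ?_
        rw [smul_add, smul_smul, smul_smul, mul_comm (bspline V i p u) (alph U k ubar p i),
          mul_comm (bspline V i p u) (1 - alph U k ubar p i)]
end

section
/- The derivative of a degree-p B-spline basis function satisfies N'_{i,p}(u) = (p/(u_{i+p} − u_i)) N_{i,p-1}(u) − (p/(u_{i+p+1} − u_{i+1})) N_{i+1,p-1}(u) at every u in the interior of a knot span (with terms having zero denominator taken to be zero). -/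
/-- degenerate support: if `U i = U (i+p+1)` then `N_{i,p} = 0`. -/
lemma bspline_degen (U : ℕ → ℝ) (hU : Monotone U) :
    ∀ p i, U i = U (i + p + 1) → ∀ u, bspline U i p u = 0 := by
  intro p
  induction p with
  | zero =>
    intro i h u
    simp only [bspline]
    rw [if_neg]
    rintro ⟨h1, h2⟩
    simp only [Nat.add_zero] at h
    linarith
  | succ p ih =>
    intro i h u
    have h1 : U i = U (i + p + 1) := le_antisymm (hU (by omega)) (h ▸ hU (by omega))
    have h2 : U (i+1) = U (i + 1 + p + 1) :=
      le_antisymm (hU (by omega)) (by rw [show i+1+p+1 = i+(p+1)+1 from by ring, ← h]; exact hU (by omega))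
    simp only [bspline, ih i h1, ih (i+1) h2, mul_zero, add_zero]

lemma bspline_zero_on (U : ℕ → ℝ) (hU : Monotone U) (j k : ℕ) (t : ℝ)
    (ht : t ∈ Set.Ioo (U j) (U (j + 1))) :
    bspline U k 0 t = if k = j then 1 else 0 := by
  obtain ⟨ht1, ht2⟩ := ht
  simp only [bspline]
  congr 1
  simp only [eq_iff_iff]
  constructor
  · rintro ⟨h1, h2⟩
    by_contra hkj
    rcases Nat.lt_or_ge k j with hk | hk
    · have : U (k+1) ≤ U j := hU (by omega)
      linarith
    · have hk' : j + 1 ≤ k := by omega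
      have : U (j+1) ≤ U k := hU hk'
      linarith
  · rintro rfl
    exact ⟨ht1.le, ht2⟩

lemma bspline_hasDerivAt_aux (U : ℕ → ℝ) (hU : Monotone U) (j : ℕ) (u : ℝ)
    (hu : u ∈ Set.Ioo (U j) (U (j + 1))) :
    ∀ p i, HasDerivAt (fun t => bspline U i (p + 1) t)
      (((p : ℝ) + 1) / (U (i + p + 1) - U i) * bspline U i p u
        - ((p : ℝ) + 1) / (U (i + p + 2) - U (i + 1)) * bspline U (i + 1) p u) u := by
  intro p
  induction p with
  | zero =>
    intro i
    set C0 := bspline U i 0 u with hC0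
    set C1 := bspline U (i + 1) 0 u with hC1
    have hg : HasDerivAt (fun t : ℝ =>
        (t - U i) / (U (i + 1) - U i) * C0
          + (U (i + 2) - t) / (U (i + 2) - U (i + 1)) * C1)
        (1 / (U (i + 1) - U i) * C0 + (-1) / (U (i + 2) - U (i + 1)) * C1) u := by
      have h1 : HasDerivAt (fun t : ℝ => (t - U i) / (U (i + 1) - U i) * C0)
          (1 / (U (i + 1) - U i) * C0) u :=
        (((hasDerivAt_id u).sub_const (U i)).div_const _).mul_const _
      have h2 : HasDerivAt (fun t : ℝ => (U (i + 2) - t) / (U (i + 2) - U (i + 1)) * C1)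
          ((-1) / (U (i + 2) - U (i + 1)) * C1) u := by
        have := (((hasDerivAt_id u).const_sub (U (i + 2))).div_const
          (U (i + 2) - U (i + 1))).mul_const C1
        exact this
      exact h1.add h2
    have heq : (fun t => bspline U i (0 + 1) t) =ᶠ[nhds u] (fun t : ℝ =>
        (t - U i) / (U (i + 1) - U i) * C0
          + (U (i + 2) - t) / (U (i + 2) - U (i + 1)) * C1) := by
      filter_upwards [isOpen_Ioo.mem_nhds hu] with t ht
      show (t - U i) / (U (i + 0 + 1) - U i) * bspline U i 0 t
          + (U (i + 0 + 2) - t) / (U (i + 0 + 2) - U (i + 1)) * bspline U (i + 1) 0 t = _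
      rw [bspline_zero_on U hU j i t ht, bspline_zero_on U hU j (i+1) t ht,
        hC0, hC1, bspline_zero_on U hU j i u hu, bspline_zero_on U hU j (i+1) u hu]
    have := hg.congr_of_eventuallyEq heq
    refine this.congr_deriv ?_
    push_cast
    ring
  | succ p ih =>
    intro i
    have hA := ih i
    have hB := ih (i + 1)
    have h1 : HasDerivAt (fun t : ℝ => (t - U i) / (U (i + p + 2) - U i))
        (1 / (U (i + p + 2) - U i)) u := by
      have := ((hasDerivAt_id u).sub_const (U i)).div_const (U (i + p + 2) - U i)
      exact this
    have h2 : HasDerivAt (fun t : ℝ => (U (i + p + 3) - t) / (U (i + p + 3) - U (i + 1)))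
        ((-1) / (U (i + p + 3) - U (i + 1))) u := by
      have := ((hasDerivAt_id u).const_sub (U (i + p + 3))).div_const
        (U (i + p + 3) - U (i + 1))
      exact this
    have hm1 := h1.mul hA
    have hm2 := h2.mul hB
    have htot := hm1.add hm2
    have hfun : (fun t => bspline U i (p + 1 + 1) t) = (fun t =>
        (t - U i) / (U (i + p + 2) - U i) * bspline U i (p + 1) t
          + (U (i + p + 3) - t) / (U (i + p + 3) - U (i + 1)) * bspline U (i + 1) (p + 1) t) := by
      funext t
      show (t - U i) / (U (i + (p+1) + 1) - U i) * bspline U i (p+1) t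
          + (U (i + (p+1) + 2) - t) / (U (i + (p+1) + 2) - U (i + 1)) * bspline U (i + 1) (p+1) t = _
      norm_num [show i + (p+1) + 1 = i + p + 2 from by omega,
        show i + (p+1) + 2 = i + p + 3 from by omega]
    rw [hfun]
    refine htot.congr_deriv ?_
    -- now a scalar identity
    have eA : bspline U i (p + 1) u
        = (u - U i) / (U (i + p + 1) - U i) * bspline U i p u
          + (U (i + p + 2) - u) / (U (i + p + 2) - U (i + 1)) * bspline U (i + 1) p u := rfl
    have eB : bspline U (i + 1) (p + 1) u
        = (u - U (i + 1)) / (U (i + p + 2) - U (i + 1)) * bspline U (i + 1) p u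
          + (U (i + p + 3) - u) / (U (i + p + 3) - U (i + 2)) * bspline U (i + 2) p u := by
      show (u - U (i+1)) / (U (i+1+p+1) - U (i+1)) * bspline U (i+1) p u
          + (U (i+1+p+2) - u) / (U (i+1+p+2) - U (i+1+1)) * bspline U (i+1+1) p u = _
      norm_num [show i+1+p+1 = i+p+2 from by omega, show i+1+p+2 = i+p+3 from by omega,
        show i+1+1 = i+2 from by omega]
    simp only [show i+1+p+1 = i+p+2 from by omega, show i+1+p+2 = i+p+3 from by omega,
      show i+1+1 = i+2 from by omega, show i+(p+1)+1 = i+p+2 from by omega,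
      show i+(p+1)+2 = i+p+3 from by omega]
    rw [eA, eB]
    push_cast
    rcases eq_or_ne (U (i + p + 2)) (U (i + 1)) with hbc | hbc
    · have hm : U (i + p + 1) = U (i + 1) :=
        le_antisymm (hbc ▸ hU (by omega)) (hU (by omega))
      rw [hbc, hm]
      simp only [sub_self, div_zero, zero_mul, mul_zero, add_zero, zero_add]
      ring
    · have hba : U (i + p + 2) - U i ≠ 0 := by
        have h1 : U i ≤ U (i + 1) := hU (by omega)
        have h2 : U (i + 1) ≤ U (i + p + 2) := hU (by omega)
        intro h
        exact hbc (le_antisymm (by linarith [sub_eq_zero.1 h]) h2)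
      have hdc : U (i + p + 3) - U (i + 1) ≠ 0 := by
        have h1 : U (i + p + 2) ≤ U (i + p + 3) := hU (by omega)
        have h2 : U (i + 1) ≤ U (i + p + 2) := hU (by omega)
        intro h
        exact hbc (le_antisymm (by linarith [sub_eq_zero.1 h]) h2)
      have hbc' : U (i + p + 2) - U (i + 1) ≠ 0 := sub_ne_zero.2 hbc
      field_simp
      ring

/-- derivative of a B-spline basis function: at every `u` in the
interior of a knot span `(U j, U (j+1))`,
`N'_{i,p}(u) = p/(U (i+p) - U i) * N_{i,p-1}(u) - p/(U (i+p+1) - U (i+1)) * N_{i+1,p-1}(u)`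
(terms with zero denominator are zero, via Lean's `x / 0 = 0`). -/
theorem bspline_deriv (U : ℕ → ℝ) (hU : Monotone U) (p : ℕ) (hp : 1 ≤ p)
    (i j : ℕ) (u : ℝ) (hu : u ∈ Set.Ioo (U j) (U (j + 1))) :
    HasDerivAt (fun t => bspline U i p t)
      ((p : ℝ) / (U (i + p) - U i) * bspline U i (p - 1) u
        - (p : ℝ) / (U (i + p + 1) - U (i + 1)) * bspline U (i + 1) (p - 1) u) u := by
  obtain ⟨q, rfl⟩ : ∃ q, p = q + 1 := ⟨p - 1, by omega⟩
  have := bspline_hasDerivAt_aux U hU j u hu q i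
  simp only [show i + (q + 1) = i + q + 1 from by omega,
    show i + (q + 1) + 1 = i + q + 2 from by omega, show q + 1 - 1 = q from by omega]
  push_cast
  exact this
end
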